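/- arXiv:0902.3831 — 2 statements merged into one kernel-verified Lean document; each statement's English description precedes it below -/
import Mathlib

section
/- The map τ : B → [0,1] is strictly order preserving: for all s, s′ ∈ B, if s ≺ s′ then τ(s) < τ(s′). -/
/-- The `j`-th entry (1-indexed) of a finite sequence of positive naturals,
viewed as a natural number. Only used for `1 ≤ j ≤ s.length`. -/
def nthSeq (s : List ℕ+) (j : ℕ) : ℕ := ↑(s.getD (j - 1) 1)

/-- The linear order `⪯` on finite sequences of positive natural numbers:
`s ⪯ t` iff either (a) there is an index `j ≤ min (ℓ s) (ℓ t)` which is the first index where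
`s` and `t` differ, and there `s j < t j`, or (b) `ℓ s ≤ ℓ t` and `t` extends `s`. -/
def sle (s t : List ℕ+) : Prop :=
  (∃ j, 1 ≤ j ∧ j ≤ min s.length t.length ∧
     (∀ i, 1 ≤ i → i < j → nthSeq s i = nthSeq t i) ∧ nthSeq s j < nthSeq t j) ∨
  (s.length ≤ t.length ∧ ∀ j, 1 ≤ j → j ≤ s.length → nthSeq s j = nthSeq t j)

/-- The strict version `≺` of the order `⪯`. -/
def slt (s t : List ℕ+) : Prop := sle s t ∧ s ≠ t

/-- The set `B` of nonempty sequences `s` with `s i ≤ i` for all `1 ≤ i ≤ ℓ s`. -/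
def BSet : Set (List ℕ+) := {s | 1 ≤ s.length ∧ ∀ i, 1 ≤ i → i ≤ s.length → nthSeq s i ≤ i}

/-- `λ n = 1 / (2^n n!)`. -/
noncomputable def lam (n : ℕ) : ℝ := 1 / ((2 : ℝ) ^ n * (n.factorial : ℝ))

/-- `τ s = Σ_{t ∈ B, t ≺ s} λ (ℓ t)`. -/
noncomputable def tau (s : List ℕ+) : ℝ :=
  ∑' t : {t : List ℕ+ // t ∈ BSet ∧ slt t s}, lam t.1.length

/-!
If `t ≺ s` then `t ≺ s'` by transitivity, so the series defining `τ s'` contains every term of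
the series for `τ s`, plus the positive term `λ (ℓ s)` contributed by `t = s` itself.
The series converge: subtracting one from each entry identifies `B_n` with the `n!` Lehmer
codes of length `n`, so the terms of length `n` add up to `n! λ n = 2⁻ⁿ`.
-/

open scoped Nat

lemma lam_pos (n : ℕ) : 0 < lam n := by
  unfold lam; positivity

lemma lam_nonneg (n : ℕ) : 0 ≤ lam n := (lam_pos n).le

lemma nthSeq_add_one {s : List ℕ+} {i : ℕ} (h : i < s.length) : nthSeq s (i + 1) = s[i] := by
  simp [nthSeq, List.getElem?_eq_getElem h]

lemma eq_of_nthSeq_eq {s t : List ℕ+} (hl : s.length = t.length)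
    (h : ∀ j, 1 ≤ j → j ≤ s.length → nthSeq s j = nthSeq t j) : s = t := by
  refine List.ext_getElem hl fun i hs ht => ?_
  have := h (i + 1) (by omega) (by omega)
  rw [nthSeq_add_one hs, nthSeq_add_one ht] at this
  exact PNat.coe_injective this

section Order

variable {s t u : List ℕ+}

lemma sle_trans (h₁ : sle s t) (h₂ : sle t u) : sle s u := by
  rcases h₁ with ⟨j₁, hj₁, hj₁s, agree₁, lt₁⟩ | ⟨hlen₁, ext₁⟩ <;>
    rcases h₂ with ⟨j₂, hj₂, hj₂s, agree₂, lt₂⟩ | ⟨hlen₂, ext₂⟩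
  · rcases lt_trichotomy j₁ j₂ with hlt | rfl | hgt
    · exact Or.inl ⟨j₁, hj₁, by omega, fun i hi hij => (agree₁ i hi hij).trans
        (agree₂ i hi (by omega)), agree₂ j₁ hj₁ hlt ▸ lt₁⟩
    · exact Or.inl ⟨j₁, hj₁, by omega, fun i hi hij => (agree₁ i hi hij).trans
        (agree₂ i hi hij), lt₁.trans lt₂⟩
    · exact Or.inl ⟨j₂, hj₂, by omega, fun i hi hij => (agree₁ i hi (by omega)).trans
        (agree₂ i hi hij), (agree₁ j₂ hj₂ hgt).symm ▸ lt₂⟩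
  · exact Or.inl ⟨j₁, hj₁, by omega, fun i hi hij => (agree₁ i hi hij).trans
      (ext₂ i hi (by omega)), ext₂ j₁ hj₁ (by omega) ▸ lt₁⟩
  · by_cases hj₂s' : j₂ ≤ s.length
    · exact Or.inl ⟨j₂, hj₂, by omega, fun i hi hij => (ext₁ i hi (by omega)).trans
        (agree₂ i hi hij), (ext₁ j₂ hj₂ hj₂s').symm ▸ lt₂⟩
    · exact Or.inr ⟨by omega, fun i hi his => (ext₁ i hi his).trans
        (agree₂ i hi (by omega))⟩
  · exact Or.inr ⟨hlen₁.trans hlen₂, fun i hi his => (ext₁ i hi his).trans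
      (ext₂ i hi (by omega))⟩

lemma sle_antisymm (h₁ : sle s t) (h₂ : sle t s) : s = t := by
  rcases h₁ with ⟨j₁, hj₁, hj₁s, agree₁, lt₁⟩ | ⟨hlen₁, ext₁⟩ <;>
    rcases h₂ with ⟨j₂, hj₂, hj₂s, agree₂, lt₂⟩ | ⟨hlen₂, ext₂⟩
  · rcases lt_trichotomy j₁ j₂ with hlt | rfl | hgt
    · exact absurd (agree₂ j₁ hj₁ hlt) (by omega)
    · omega
    · exact absurd (agree₁ j₂ hj₂ hgt) (by omega)
  · exact absurd (ext₂ j₁ hj₁ (by omega)) (by omega)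
  · exact absurd (ext₁ j₂ hj₂ (by omega)) (by omega)
  · exact eq_of_nthSeq_eq (by omega) ext₁

lemma slt_trans (h₁ : slt s t) (h₂ : slt t u) : slt s u := by
  refine ⟨sle_trans h₁.1 h₂.1, ?_⟩
  rintro rfl
  exact h₂.2 (sle_antisymm h₂.1 h₁.1)

end Order

abbrev LehmerCode : Type := (n : ℕ) × ((i : Fin n) → Fin (i.1 + 1))

def LehmerCode.toList (c : LehmerCode) : List ℕ+ := List.ofFn fun i => (c.2 i).val.succPNat

lemma LehmerCode.toList_injective : Function.Injective LehmerCode.toList := by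
  rintro ⟨m, f⟩ ⟨n, g⟩ hfg
  obtain ⟨rfl, hfg⟩ := Sigma.mk.inj_iff.mp (List.ofFn_inj'.mp hfg)
  congr
  funext i
  exact Fin.ext (Nat.succPNat_inj.mp (congrFun (eq_of_heq hfg) i))

lemma LehmerCode.mem_range_toList {t : List ℕ+} (ht : t ∈ BSet) : t ∈ Set.range toList := by
  have hle (i : Fin t.length) : t[i.1].natPred < i.1 + 1 := by
    have := ht.2 (i.1 + 1) (by omega) i.isLt
    rw [nthSeq_add_one i.isLt] at this
    rw [PNat.natPred]
    omega
  exact ⟨⟨t.length, fun i => ⟨t[i.1].natPred, hle i⟩⟩, by simp [toList, List.ofFn_getElem]⟩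

lemma LehmerCode.card_fiber (n : ℕ) : Fintype.card ((i : Fin n) → Fin (i.1 + 1)) = n ! := by
  simp only [Fintype.card_pi, Fintype.card_fin]
  rw [Fin.prod_univ_eq_prod_range (· + 1), Finset.prod_range_add_one_eq_factorial]

lemma LehmerCode.summable_lam : Summable fun c : LehmerCode => lam c.1 := by
  refine (summable_sigma_of_nonneg fun c => lam_nonneg c.1).mpr
    ⟨fun _ => Summable.of_finite, summable_geometric_two.congr fun n => ?_⟩
  simp only [tsum_fintype, Finset.sum_const, Finset.card_univ, card_fiber, nsmul_eq_mul, lam,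
    one_div, inv_pow]
  field_simp

lemma summable_indicator_lam_length {A : Set (List ℕ+)} (hA : A ⊆ BSet) :
    Summable (A.indicator fun t => lam t.length) := by
  refine (LehmerCode.toList_injective.summable_iff fun t ht => ?_).mp ?_
  · exact Set.indicator_of_notMem (fun htA => ht (LehmerCode.mem_range_toList (hA htA))) _
  · refine LehmerCode.summable_lam.of_nonneg_of_le
      (fun _ => Set.indicator_nonneg (fun t _ => lam_nonneg t.length) _) fun c => ?_
    exact (Set.indicator_le_self' (fun t _ => lam_nonneg t.length) _).trans_eq
      (by simp [LehmerCode.toList])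

def BIio (s : List ℕ+) : Set (List ℕ+) := {t | t ∈ BSet ∧ slt t s}

lemma tau_eq_tsum_indicator (s : List ℕ+) :
    tau s = ∑' t, (BIio s).indicator (fun t => lam t.length) t :=
  tsum_subtype (BIio s) fun t => lam t.length

theorem tau_strictMono_general (s s' : List ℕ+) (hs : s ∈ BSet) (h : slt s s') :
    tau s < tau s' := by
  have hsub : BIio s ⊆ BIio s' := fun t ht => ⟨ht.1, slt_trans ht.2 h⟩
  have hs_notMem : s ∉ BIio s := fun hss => hss.2.2 rfl
  have hs_mem : s ∈ BIio s' := ⟨hs, h⟩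
  rw [tau_eq_tsum_indicator, tau_eq_tsum_indicator]
  refine Summable.tsum_lt_tsum (i := s)
    (Set.indicator_le_indicator_of_subset hsub fun t => lam_nonneg t.length) ?_
    (summable_indicator_lam_length fun t ht => ht.1)
    (summable_indicator_lam_length fun t ht => ht.1)
  rw [Set.indicator_of_notMem hs_notMem, Set.indicator_of_mem hs_mem]
  exact lam_pos s.length

/-- The map `τ : B → [0,1]` is strictly order preserving: for all `s, s' ∈ B`,
if `s ≺ s'` then `τ s < τ s'`. -/
theorem tau_strictMono (s s' : List ℕ+) (hs : s ∈ BSet) (hs' : s' ∈ BSet) (h : slt s s') :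
    tau s < tau s' :=
  tau_strictMono_general s s' hs h
end

section
/- The function d on the Hawaiian Earring ℍ, defined by d(x,y) = ‖x − y‖ (Euclidean norm) if x and y lie on a common circle L_n, and d(x,y) = ‖x‖ + ‖y‖ otherwise, is a well-defined metric on ℍ: it is symmetric, vanishes exactly when x = y, and satisfies the triangle inequality. -/
/-- The circle `L_n ⊂ ℝ² = ℂ` of radius `1/n` centred at `(1/n, 0)`. -/
noncomputable def Lcirc (n : ℕ) : Set ℂ := Metric.sphere ((1 / (n : ℝ) : ℝ) : ℂ) (1 / (n : ℝ))

/-- The Hawaiian Earring `ℍ ⊂ ℝ² = ℂ`, the union of the circles `L_n`, `n ≥ 1`. -/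
def HSet : Set ℂ := ⋃ n ∈ {n : ℕ | 1 ≤ n}, Lcirc n

open Classical in
/-- The metric `d` on the Hawaiian Earring: `d x y = ‖x - y‖` (Euclidean norm) if `x` and
`y` lie on a common circle `L_n`, and `d x y = ‖x‖ + ‖y‖` otherwise. -/
noncomputable def HEdist (x y : ℂ) : ℝ :=
  if ∃ n : ℕ, 1 ≤ n ∧ x ∈ Lcirc n ∧ y ∈ Lcirc n then ‖x - y‖ else ‖x‖ + ‖y‖

/-!
`HEdist` is the distance obtained by travelling along a circle when `x` and `y` share one,
and through the origin otherwise; it never exceeds `‖x‖ + ‖y‖`. The only nontrivial case of the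
triangle inequality is `x, y ∈ L_n` and `y, z ∈ L_m` with `n ≠ m`: two circles through `0`
tangent to the imaginary axis meet only at `0`, so `y = 0` and
`d(x, y) + d(y, z) = ‖x‖ + ‖z‖ ≥ d(x, z)`.
-/

section ViaOrigin

variable {E : Type*} [NormedAddCommGroup E] (R : E → E → Prop) [DecidableRel R]

def viaOriginDist (x y : E) : ℝ :=
  if R x y then ‖x - y‖ else ‖x‖ + ‖y‖

variable {R}

lemma viaOriginDist_le_norm_add_norm (x y : E) : viaOriginDist R x y ≤ ‖x‖ + ‖y‖ := by
  unfold viaOriginDist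
  split_ifs
  exacts [norm_sub_le x y, le_rfl]

lemma viaOriginDist_comm (hR : ∀ x y, R x y → R y x) (x y : E) :
    viaOriginDist R x y = viaOriginDist R y x := by
  unfold viaOriginDist
  by_cases h : R x y
  · rw [if_pos h, if_pos (hR x y h), norm_sub_rev]
  · rw [if_neg h, if_neg (fun h' => h (hR y x h')), add_comm]

lemma viaOriginDist_eq_zero_iff {x y : E} (hx : R x x) : viaOriginDist R x y = 0 ↔ x = y := by
  unfold viaOriginDist
  split_ifs with h
  · exact norm_sub_eq_zero_iff
  · constructor
    · intro h0
      obtain ⟨hx0, hy0⟩ := (add_eq_zero_iff_of_nonneg (norm_nonneg x) (norm_nonneg y)).1 h0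
      rw [norm_eq_zero.1 hx0, norm_eq_zero.1 hy0]
    · rintro rfl
      exact absurd hx h

lemma viaOriginDist_triangle (hR : ∀ x y z, R x y → R y z → R x z ∨ y = 0) (x y z : E) :
    viaOriginDist R x z ≤ viaOriginDist R x y + viaOriginDist R y z := by
  have hxz := viaOriginDist_le_norm_add_norm (R := R) x z
  have hxy := norm_sub_norm_le x y
  have hzy := norm_sub_norm_le z y
  rw [norm_sub_rev] at hzy
  by_cases h₁ : R x y <;> by_cases h₂ : R y z
  · rcases hR x y z h₁ h₂ with h₃ | rfl
    · simp only [viaOriginDist, if_pos h₁, if_pos h₂, if_pos h₃]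
      exact norm_sub_le_norm_sub_add_norm_sub x y z
    · simpa [viaOriginDist, h₁, h₂] using hxz
  all_goals simp only [viaOriginDist, h₁, h₂, if_true, if_false] at hxz ⊢; linarith [norm_nonneg y]

end ViaOrigin

lemma norm_sq_eq_of_mem_sphere_ofReal_self {r : ℝ} {y : ℂ} (hy : y ∈ Metric.sphere (r : ℂ) r) :
    ‖y‖ ^ 2 = 2 * r * y.re := by
  rw [mem_sphere_iff_norm] at hy
  have h := congrArg (· ^ 2) hy
  simp only [Complex.sq_norm, Complex.normSq_apply, Complex.sub_re, Complex.sub_im,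
    Complex.ofReal_re, Complex.ofReal_im] at h ⊢
  linear_combination h

lemma eq_zero_of_mem_sphere_ofReal_self {r s : ℝ} (hrs : r ≠ s) {y : ℂ}
    (hr : y ∈ Metric.sphere (r : ℂ) r) (hs : y ∈ Metric.sphere (s : ℂ) s) : y = 0 := by
  have hr' := norm_sq_eq_of_mem_sphere_ofReal_self hr
  have hre : y.re = 0 := by
    have : (r - s) * y.re = 0 := by
      linear_combination (norm_sq_eq_of_mem_sphere_ofReal_self hs - hr') / 2
    exact (mul_eq_zero.1 this).resolve_left (sub_ne_zero.2 hrs)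
  rw [hre, mul_zero, sq_eq_zero_iff, norm_eq_zero] at hr'
  exact hr'

lemma eq_zero_of_mem_Lcirc_of_ne {n m : ℕ} (hnm : n ≠ m) {y : ℂ}
    (hn : y ∈ Lcirc n) (hm : y ∈ Lcirc m) : y = 0 := by
  refine eq_zero_of_mem_sphere_ofReal_self ?_ hn hm
  simpa only [one_div, ne_eq, inv_inj, Nat.cast_inj] using hnm

def OnCommonCircle (x y : ℂ) : Prop :=
  ∃ n : ℕ, 1 ≤ n ∧ x ∈ Lcirc n ∧ y ∈ Lcirc n

lemma onCommonCircle_symm (x y : ℂ) : OnCommonCircle x y → OnCommonCircle y x :=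
  fun ⟨n, hn, hx, hy⟩ => ⟨n, hn, hy, hx⟩

lemma onCommonCircle_self {x : ℂ} (hx : x ∈ HSet) : OnCommonCircle x x := by
  obtain ⟨n, hn, hxn⟩ : ∃ n : ℕ, 1 ≤ n ∧ x ∈ Lcirc n := by simpa [HSet] using hx
  exact ⟨n, hn, hxn, hxn⟩

lemma onCommonCircle_trans_or_eq_zero (x y z : ℂ) :
    OnCommonCircle x y → OnCommonCircle y z → OnCommonCircle x z ∨ y = 0 := by
  rintro ⟨n, hn, hxn, hyn⟩ ⟨m, -, hym, hzm⟩
  rcases eq_or_ne n m with rfl | hnm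
  · exact .inl ⟨n, hn, hxn, hzm⟩
  · exact .inr (eq_zero_of_mem_Lcirc_of_ne hnm hyn hym)

open Classical in
lemma HEdist_eq_viaOriginDist : HEdist = viaOriginDist OnCommonCircle := rfl

/-- The function `d` on the Hawaiian Earring `ℍ` is a well-defined metric: it is symmetric,
vanishes exactly when `x = y`, and satisfies the triangle inequality. -/
theorem HEdist_isMetric :
    (∀ x ∈ HSet, ∀ y ∈ HSet, HEdist x y = HEdist y x) ∧
    (∀ x ∈ HSet, ∀ y ∈ HSet, (HEdist x y = 0 ↔ x = y)) ∧
    (∀ x ∈ HSet, ∀ y ∈ HSet, ∀ z ∈ HSet, HEdist x z ≤ HEdist x y + HEdist y z) := by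
  classical
  rw [HEdist_eq_viaOriginDist]
  exact ⟨fun x _ y _ => viaOriginDist_comm onCommonCircle_symm x y,
    fun _ hx _ _ => viaOriginDist_eq_zero_iff (onCommonCircle_self hx),
    fun x _ y _ z _ => viaOriginDist_triangle onCommonCircle_trans_or_eq_zero x y z⟩
end
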